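/- Let F be a field, let n ≥ 1, t ≥ 2, σ ∈ {1,−1}, and let λB+A be an arbitrary pencil of size (t+1)n×(t+1)n over F. Let L(λ) be the associated modified block Kronecker pencil (of size 2tn×2tn). Then: (i) L(λ) is a linearization of the 2n×2n matrix polynomial P(λ) := (Λ̂_t(λ)^T⊗I_n)(λB+A)(Λ̂_t(λ)⊗I_n), i.e., there exist unimodular U(λ), V(λ) with U(λ)L(λ)V(λ) = diag(I_{(2t−2)n}, P(λ)); and (ii) rev_1 L(λ) is a linearization of the 2n×2n matrix polynomial P̃(λ) := (Λ̃_t(λ)^T⊗I_n)(λA+B)(Λ̃_t(λ)⊗I_n), i.e., there exist unimodular U′(λ), V′(λ) with U′(λ)(rev_1 L)(λ)V′(λ) = diag(I_{(2t−2)n}, P̃(λ)). -/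

import Mathlib

open Polynomial Matrix
open scoped Kronecker

noncomputable section

/-- Entrywise inclusion of a constant matrix into polynomial matrices. -/
def matC {F : Type} [Field F] {m l : Type*} (M : Matrix m l F) : Matrix m l (Polynomial F) :=
  M.map fun a => (C a : Polynomial F)

/-- The pencil `λ ↦ A + λ B`, represented as a matrix over `F[λ]`. -/
def pencil {F : Type} [Field F] {m l : Type*} (A B : Matrix m l F) :
    Matrix m l (Polynomial F) :=
  matC A + (X : Polynomial F) • matC B

/-- Grade-`g` reversal `rev_g`, applied entrywise. -/
def revMat {F : Type} [Field F] {m l : Type*} (g : ℕ) (M : Matrix m l (Polynomial F)) :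
    Matrix m l (Polynomial F) :=
  M.map fun q => q.reflect g

/-- Entrywise evaluation of a polynomial matrix at a point. -/
def evalMat {F : Type} [Field F] {m l : Type*} (a : F) (M : Matrix m l (Polynomial F)) :
    Matrix m l F :=
  M.map fun q => q.eval a

/-- The matrix polynomial `P(λ) = ∑_{k=0}^d λ^k P_k` built from its coefficients. -/
def polyOfCoeffs {F : Type} [Field F] {n : ℕ} (d : ℕ) (Pc : ℕ → Matrix (Fin n) (Fin n) F) :
    Matrix (Fin n) (Fin n) (Polynomial F) :=
  ∑ k ∈ Finset.range (d + 1), (X : Polynomial F) ^ k • matC (Pc k)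

/-- The `(i,j)` block of a block-partitioned matrix. -/
def blk {α p q n m : Type*} (A : Matrix (p × n) (q × m) α) (i : p) (j : q) :
    Matrix n m α :=
  Matrix.of fun r c => A (i, r) (j, c)

/-- `Λ_s(λ) ⊗ I_n`, an `(s+1)n × n` polynomial matrix whose `i`-th block is `λ^{s-i} I_n`. -/
def Lam (F : Type) [Field F] (s n : ℕ) :
    Matrix (Fin (s+1) × Fin n) (Fin n) (Polynomial F) :=
  Matrix.of fun p c => if p.2 = c then (X : Polynomial F) ^ (s - (p.1 : ℕ)) else 0

/-- The pencil `L_s(λ) ∈ F[λ]^{s×(s+1)}` with `-1` on the diagonal and `λ` on the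
superdiagonal. -/
def Lpen (F : Type) [Field F] (s : ℕ) : Matrix (Fin s) (Fin (s+1)) (Polynomial F) :=
  Matrix.of fun i j =>
    if (j : ℕ) = (i : ℕ) then -1 else if (j : ℕ) = (i : ℕ) + 1 then X else 0

/-- The block Kronecker pencil `[[λB+A, L_s(λ)ᵀ⊗I_n],[σ L_s(λ)⊗I_n, 0]]` associated with a
pencil `M = λB+A` of size `(s+1)n × (s+1)n`. -/
def blockKron (F : Type) [Field F] (s n : ℕ) (σ : F)
    (M : Matrix (Fin (s+1) × Fin n) (Fin (s+1) × Fin n) (Polynomial F)) :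
    Matrix ((Fin (s+1) × Fin n) ⊕ (Fin s × Fin n)) ((Fin (s+1) × Fin n) ⊕ (Fin s × Fin n))
      (Polynomial F) :=
  Matrix.fromBlocks M (Lpen F s ⊗ₖ (1 : Matrix (Fin n) (Fin n) (Polynomial F)))ᵀ
    (σ • (Lpen F s ⊗ₖ (1 : Matrix (Fin n) (Fin n) (Polynomial F)))) 0

/-- `L` is a linearization of `P`: there are unimodular `U`, `V` with
`U L V = diag(I_m, P)` (up to the fixed identification of index sets). -/
def IsLinearization {F : Type} [Field F] (m : ℕ) {ι ρ : Type*} [Fintype ι] [DecidableEq ι]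
    [Fintype ρ] [DecidableEq ρ] (L : Matrix ι ι (Polynomial F))
    (P : Matrix ρ ρ (Polynomial F)) : Prop :=
  ∃ (e : (Fin m ⊕ ρ) ≃ ι) (U V : Matrix ι ι (Polynomial F)),
    IsUnit U.det ∧ IsUnit V.det ∧
      U * L * V =
        (Matrix.fromBlocks (1 : Matrix (Fin m) (Fin m) (Polynomial F)) 0 0 P).submatrix
          e.symm e.symm

/-- The block conditions `∑_{i+j=d+2-k} B_{ij} + ∑_{i+j=d+1-k} A_{ij} = P_k` for
`k = 0,…,d` (blocks are indexed here `0`-based, so `i+j` `1`-based is `i+j+2` `0`-based). -/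
def blockConds {F : Type} [Field F] {s n : ℕ} (d : ℕ) (Pc : ℕ → Matrix (Fin n) (Fin n) F)
    (A B : Matrix (Fin (s+1) × Fin n) (Fin (s+1) × Fin n) F) : Prop :=
  ∀ k, k ≤ d →
    (∑ p ∈ Finset.univ.filter
        (fun p : Fin (s+1) × Fin (s+1) => (p.1 : ℕ) + (p.2 : ℕ) + 2 + k = d + 2),
        blk B p.1 p.2) +
      (∑ p ∈ Finset.univ.filter
        (fun p : Fin (s+1) × Fin (s+1) => (p.1 : ℕ) + (p.2 : ℕ) + 2 + k = d + 1),
        blk A p.1 p.2) = Pc k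

/-- `L̂_t(λ) ⊗ I_n` (with `t = u+1`): first block column zero, remaining block columns
`L_{t-1}(λ) ⊗ I_n`; the column index is split as `Fin n ⊕ (Fin t × Fin n)`. -/
def LhatB (F : Type) [Field F] (u n : ℕ) :
    Matrix (Fin u × Fin n) (Fin n ⊕ Fin (u+1) × Fin n) (Polynomial F) :=
  Matrix.of fun p q =>
    match q with
    | Sum.inl _ => 0
    | Sum.inr c => (Lpen F u ⊗ₖ (1 : Matrix (Fin n) (Fin n) (Polynomial F))) p c

/-- The modified block Kronecker pencil `[[λB+A, L̂_t(λ)ᵀ⊗I_n],[σ L̂_t(λ)⊗I_n, 0]]`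
(with `t = u+1`). -/
def modBK (F : Type) [Field F] (u n : ℕ) (σ : F)
    (M : Matrix (Fin n ⊕ Fin (u+1) × Fin n) (Fin n ⊕ Fin (u+1) × Fin n) (Polynomial F)) :
    Matrix ((Fin n ⊕ Fin (u+1) × Fin n) ⊕ Fin u × Fin n)
      ((Fin n ⊕ Fin (u+1) × Fin n) ⊕ Fin u × Fin n) (Polynomial F) :=
  Matrix.fromBlocks M (LhatB F u n)ᵀ (σ • LhatB F u n) 0

/-- `Λ̂_t(λ) ⊗ I_n` (with `t = u+1`): the `(t+1)n × 2n` polynomial matrix whose transpose has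
block rows `(I_n, 0, …, 0)` and `(0, λ^{t-1}I_n, …, λ I_n, I_n)`. -/
def LamHatB (F : Type) [Field F] (u n : ℕ) :
    Matrix (Fin n ⊕ Fin (u+1) × Fin n) (Fin 2 × Fin n) (Polynomial F) :=
  Matrix.of fun q c =>
    match q with
    | Sum.inl r => if c.1 = 0 ∧ c.2 = r then 1 else 0
    | Sum.inr p => if c.1 = 1 ∧ c.2 = p.2 then (X : Polynomial F) ^ (u - (p.1 : ℕ)) else 0

/-- `Λ̃_t(λ) ⊗ I_n` (with `t = u+1`): the `(t+1)n × 2n` polynomial matrix whose transpose has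
block rows `(I_n, 0, …, 0)` and `(0, I_n, λ I_n, …, λ^{t-1} I_n)`. -/
def LamTildeB (F : Type) [Field F] (u n : ℕ) :
    Matrix (Fin n ⊕ Fin (u+1) × Fin n) (Fin 2 × Fin n) (Polynomial F) :=
  Matrix.of fun q c =>
    match q with
    | Sum.inl r => if c.1 = 0 ∧ c.2 = r then 1 else 0
    | Sum.inr p => if c.1 = 1 ∧ c.2 = p.2 then (X : Polynomial F) ^ (p.1 : ℕ) else 0

/-- A `2n × 2n` matrix assembled from four `n × n` blocks, indexed by `Fin 2 × Fin n`. -/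
def twoBlock {α : Type*} {n : ℕ} (W₁₁ W₁₂ W₂₁ W₂₂ : Matrix (Fin n) (Fin n) α) :
    Matrix (Fin 2 × Fin n) (Fin 2 × Fin n) α :=
  Matrix.of fun p q =>
    if p.1 = 0 then (if q.1 = 0 then W₁₁ p.2 q.2 else W₁₂ p.2 q.2)
    else (if q.1 = 0 then W₂₁ p.2 q.2 else W₂₂ p.2 q.2)

/-- `Λ_t(λ) ⊗ I_n` (with `t = u+1`), over the split row index `Fin n ⊕ (Fin t × Fin n)`:
block entries `λ^t I_n, λ^{t-1} I_n, …, λ I_n, I_n`. -/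
def LamFullB (F : Type) [Field F] (u n : ℕ) :
    Matrix (Fin n ⊕ Fin (u+1) × Fin n) (Fin n) (Polynomial F) :=
  Matrix.of fun q c =>
    match q with
    | Sum.inl r => if r = c then (X : Polynomial F) ^ (u + 1) else 0
    | Sum.inr p => if p.2 = c then (X : Polynomial F) ^ (u - (p.1 : ℕ)) else 0

/-- `N̂_t(λ) = Ĥ_t(λ) ⊗ I_n` (with `t = u+1`): `Ĥ_t ∈ F[λ]^{(t-1)×(t+1)}` has `(i,j)` entry
`λ^{i+1-j}` if `2 ≤ j ≤ i+1` and `0` otherwise. -/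
def NhatB (F : Type) [Field F] (u n : ℕ) :
    Matrix (Fin u × Fin n) (Fin n ⊕ Fin (u+1) × Fin n) (Polynomial F) :=
  Matrix.of fun p q =>
    match q with
    | Sum.inl _ => 0
    | Sum.inr c =>
        if (c.1 : ℕ) ≤ (p.1 : ℕ) ∧ p.2 = c.2 then
          (X : Polynomial F) ^ ((p.1 : ℕ) - (c.1 : ℕ)) else 0

end


/-! Write `E = L̂_t(λ) ⊗ I_n`, `Λ = Λ̂_t(λ) ⊗ I_n` and `N = -Ĥ_t(λ) ⊗ I_n`. Then `EΛ = 0`,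
`ENᵀ = I`, and `[N; Λᵀ]` has the right inverse `[Eᵀ, Λ̂_t(0) ⊗ I_n]`. The congruence by the
unimodular matrix `K = [[N, 0], [0, I], [Λᵀ, 0]]` turns `L = [[M, Eᵀ], [σE, 0]]` into
`[[S, *], [*, ΛᵀMΛ]]` with `S = [[NMNᵀ, I], [σI, 0]]`. Since `S` is unimodular and its Schur
complement is exactly `ΛᵀMΛ`, this gives (i).

For (ii), reflecting `L` only swaps the roles of `A` and `B` in the top-left block and replaces
`L̂_t` by `rev_1 L̂_t`; after reversing the order of the `t` block rows and columns, `rev_1 L̂_t`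
becomes `-L̂_t` and `Λ̃_t` becomes `Λ̂_t`, so (ii) is again an instance of the same argument. -/

section Schur

variable {R : Type*} [CommRing R] {κ ρ : Type*} [Fintype κ] [DecidableEq κ] [DecidableEq ρ]

theorem fromBlocks_diagonalize_of_mul_eq_one₁₁ [Fintype ρ] {S T : Matrix κ κ R} (hTS : T * S = 1)
    (B : Matrix κ ρ R) (C : Matrix ρ κ R) (D : Matrix ρ ρ R) :
    fromBlocks T 0 (-(C * T)) 1 * fromBlocks S B C D * fromBlocks 1 (-(T * B)) 0 1 =
      fromBlocks 1 0 0 (D - C * T * B) := by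
  simp only [fromBlocks_multiply, Matrix.mul_assoc, hTS, Matrix.neg_mul, Matrix.mul_neg]
  simp [sub_eq_neg_add]

theorem fromBlocks_zero₁₁_mul_fromBlocks_zero₂₂ {K : Type*} [Field K] [Algebra K R]
    {σ : K} (hσ : σ ≠ 0) (Y : Matrix κ κ R) :
    fromBlocks 0 (σ⁻¹ • 1) 1 (-(σ⁻¹ • Y)) * fromBlocks Y 1 (σ • 1) 0 = 1 := by
  rw [fromBlocks_multiply, ← fromBlocks_one]
  simp [smul_smul, mul_inv_cancel₀ hσ]

end Schur

section BlockKronecker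

variable {F : Type} [Field F] {ι κ ρ : Type*}

noncomputable def stackBlocks [DecidableEq κ] (N : Matrix κ ι F[X]) (Λ : Matrix ι ρ F[X]) :
    Matrix ((κ ⊕ κ) ⊕ ρ) (ι ⊕ κ) F[X] :=
  fromRows (fromBlocks N 0 0 1) (fromCols Λᵀ 0)

theorem stackBlocks_mul_mul_transpose [Fintype ι] [Fintype κ] [DecidableEq κ]
    (M : Matrix ι ι F[X]) {Λ : Matrix ι ρ F[X]} {N E : Matrix κ ι F[X]} (σ : F)
    (hEΛ : E * Λ = 0) (hEN : E * Nᵀ = 1) :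
    stackBlocks N Λ * fromBlocks M Eᵀ (σ • E) 0 * (stackBlocks N Λ)ᵀ =
      fromBlocks (fromBlocks (N * M * Nᵀ) 1 (σ • 1) 0) (fromRows (N * M * Λ) 0)
        (fromCols (Λᵀ * M * Nᵀ) 0) (Λᵀ * M * Λ) := by
  have hNE : N * Eᵀ = 1 := by simpa using congrArg transpose hEN
  have hΛE : Λᵀ * Eᵀ = 0 := by simpa using congrArg transpose hEΛ
  simp [stackBlocks, transpose_fromRows, fromBlocks_transpose, transpose_fromCols, fromRows_mul,
    fromBlocks_multiply, fromCols_mul_fromBlocks, fromBlocks_mul_fromRows, fromCols_mul_fromRows,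
    hNE, hΛE, hEΛ, hEN, Matrix.mul_assoc]

theorem stackBlocks_mul_eq_one [Fintype ι] [Fintype κ] [DecidableEq κ] [DecidableEq ρ]
    {Λ R : Matrix ι ρ F[X]} {N E : Matrix κ ι F[X]}
    (hEΛ : E * Λ = 0) (hEN : E * Nᵀ = 1) (hNR : N * R = 0) (hΛR : Λᵀ * R = 1) :
    stackBlocks N Λ *
      (fromCols (fromBlocks Eᵀ 0 0 1) (fromRows R 0) : Matrix (ι ⊕ κ) ((κ ⊕ κ) ⊕ ρ) F[X]) = 1 := by
  have hNE : N * Eᵀ = 1 := by simpa using congrArg transpose hEN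
  have hΛE : Λᵀ * Eᵀ = 0 := by simpa using congrArg transpose hEΛ
  simp [stackBlocks, fromBlocks_multiply, fromCols_mul_fromBlocks, fromBlocks_mul_fromRows,
    fromCols_mul_fromRows, hNE, hΛE, hNR, hΛR, ← fromBlocks_one]

variable [Fintype ι] [Fintype κ] [Fintype ρ] [DecidableEq ι] [DecidableEq κ] [DecidableEq ρ]
  {m : ℕ}

theorem IsLinearization.of_mul_eq {L : Matrix ι ι F[X]} {P : Matrix ρ ρ F[X]} (g : ι ≃ κ ⊕ ρ)
    (hκ : Fintype.card κ = m) {U : Matrix (κ ⊕ ρ) ι F[X]} {U' : Matrix ι (κ ⊕ ρ) F[X]}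
    {V : Matrix ι (κ ⊕ ρ) F[X]} {V' : Matrix (κ ⊕ ρ) ι F[X]} (hU : U * U' = 1)
    (hV : V' * V = 1) (h : U * L * V = fromBlocks 1 0 0 P) : IsLinearization m L P := by
  let c : Fin m ≃ κ := (Fintype.equivFinOfCardEq hκ).symm
  refine ⟨(c.sumCongr (Equiv.refl ρ)).trans g.symm, U.submatrix g id, V.submatrix id g,
    isUnit_det_of_right_inverse (B := U'.submatrix id g) ?_,
    isUnit_det_of_left_inverse (B := V'.submatrix g id) ?_, ?_⟩
  · rw [← submatrix_mul _ _ _ _ _ Function.bijective_id, hU, submatrix_one_equiv]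
  · rw [← submatrix_mul _ _ _ _ _ Function.bijective_id, hV, submatrix_one_equiv]
  · have hL : U.submatrix g id * L * V.submatrix id g = (U * L * V).submatrix g g := by
      rw [submatrix_mul _ _ _ _ _ Function.bijective_id,
        submatrix_mul _ _ _ _ _ Function.bijective_id, submatrix_id_id]
    rw [hL, h]
    ext i j
    rcases hi : g i with a | a <;> rcases hj : g j with b | b <;>
      simp [hi, hj, one_apply]

theorem IsLinearization.of_submatrix {ι' : Type*} [Fintype ι'] [DecidableEq ι']
    {L : Matrix ι ι F[X]} {P : Matrix ρ ρ F[X]} (f : ι' ≃ ι)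
    (h : IsLinearization m (L.submatrix f f) P) : IsLinearization m L P := by
  obtain ⟨e, U, V, hU, hV, hUV⟩ := h
  refine ⟨e.trans f, U.submatrix f.symm f.symm, V.submatrix f.symm f.symm,
    by rwa [det_submatrix_equiv_self], by rwa [det_submatrix_equiv_self], ?_⟩
  have hL : L = (L.submatrix f f).submatrix f.symm f.symm := by simp
  rw [hL, submatrix_mul_equiv, submatrix_mul_equiv, hUV, submatrix_submatrix]
  rfl

theorem isLinearization_fromBlocks (hm : Fintype.card κ + Fintype.card κ = m)
    (hcard : Fintype.card ι = Fintype.card κ + Fintype.card ρ) (M : Matrix ι ι F[X])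
    {Λ R : Matrix ι ρ F[X]} {N E : Matrix κ ι F[X]} {σ : F} (hσ : σ ≠ 0)
    (hEΛ : E * Λ = 0) (hEN : E * Nᵀ = 1) (hNR : N * R = 0) (hΛR : Λᵀ * R = 1) :
    IsLinearization m (fromBlocks M Eᵀ (σ • E) 0) (Λᵀ * M * Λ) := by
  set K := stackBlocks N Λ
  set J : Matrix (ι ⊕ κ) ((κ ⊕ κ) ⊕ ρ) F[X] := fromCols (fromBlocks Eᵀ 0 0 1) (fromRows R 0)
  have hKJ : K * J = 1 := stackBlocks_mul_eq_one hEΛ hEN hNR hΛR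
  set S : Matrix (κ ⊕ κ) (κ ⊕ κ) F[X] := fromBlocks (N * M * Nᵀ) 1 (σ • 1) 0
  set T : Matrix (κ ⊕ κ) (κ ⊕ κ) F[X] := fromBlocks 0 (σ⁻¹ • 1) 1 (-(σ⁻¹ • (N * M * Nᵀ)))
  have hTS : T * S = 1 := fromBlocks_zero₁₁_mul_fromBlocks_zero₂₂ hσ _
  set B := fromRows (N * M * Λ) (0 : Matrix κ ρ F[X])
  set C := fromCols (Λᵀ * M * Nᵀ) (0 : Matrix ρ κ F[X])
  have hCTB : C * T * B = 0 := by
    simp [C, T, B, fromCols_mul_fromBlocks, fromCols_mul_fromRows]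
  set U₀ : Matrix ((κ ⊕ κ) ⊕ ρ) ((κ ⊕ κ) ⊕ ρ) F[X] := fromBlocks T 0 (-(C * T)) 1
  set V₀ : Matrix ((κ ⊕ κ) ⊕ ρ) ((κ ⊕ κ) ⊕ ρ) F[X] := fromBlocks 1 (-(T * B)) 0 1
  set U₀' : Matrix ((κ ⊕ κ) ⊕ ρ) ((κ ⊕ κ) ⊕ ρ) F[X] := fromBlocks S 0 C 1
  set V₀' : Matrix ((κ ⊕ κ) ⊕ ρ) ((κ ⊕ κ) ⊕ ρ) F[X] := fromBlocks 1 (T * B) 0 1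
  have hU₀ : U₀ * U₀' = 1 := by simp [U₀, U₀', fromBlocks_multiply, Matrix.mul_assoc, hTS]
  have hV₀ : V₀' * V₀ = 1 := by simp [V₀, V₀', fromBlocks_multiply]
  have hcard' : Fintype.card (ι ⊕ κ) = Fintype.card ((κ ⊕ κ) ⊕ ρ) := by
    simp only [Fintype.card_sum]; omega
  refine IsLinearization.of_mul_eq (Fintype.equivOfCardEq hcard') (by simpa using hm)
    (U := U₀ * K) (U' := J * U₀') (V := Kᵀ * V₀) (V' := V₀' * Jᵀ) ?_ ?_ ?_
  · rw [Matrix.mul_assoc, ← Matrix.mul_assoc K, hKJ, Matrix.one_mul, hU₀]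
  · rw [Matrix.mul_assoc, ← Matrix.mul_assoc Jᵀ, ← transpose_mul, hKJ, transpose_one,
      Matrix.one_mul, hV₀]
  · calc U₀ * K * fromBlocks M Eᵀ (σ • E) 0 * (Kᵀ * V₀)
        = U₀ * (K * fromBlocks M Eᵀ (σ • E) 0 * Kᵀ) * V₀ := by simp only [Matrix.mul_assoc]
      _ = fromBlocks 1 0 0 (Λᵀ * M * Λ - C * T * B) := by
        rw [stackBlocks_mul_mul_transpose M σ hEΛ hEN]
        exact fromBlocks_diagonalize_of_mul_eq_one₁₁ hTS B C _
      _ = fromBlocks 1 0 0 (Λᵀ * M * Λ) := by rw [hCTB, sub_zero]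

end BlockKronecker

section SmallPencils

variable {F : Type} [Field F] {s u : ℕ}

theorem Lpen_mul_apply {β : Type*} (A : Matrix (Fin (s+1)) β F[X]) (i : Fin s) (b : β) :
    (Lpen F s * A) i b = -A i.castSucc b + X * A i.succ b := by
  rw [mul_apply, Fintype.sum_eq_add i.castSucc i.succ (Fin.castSucc_lt_succ).ne]
  · simp [Lpen]
  · rintro j ⟨h₁, h₂⟩
    have h₁' : (j : ℕ) ≠ i := fun h => h₁ (Fin.ext h)
    have h₂' : (j : ℕ) ≠ i + 1 := fun h => h₂ (Fin.ext h)
    simp [Lpen, h₁', h₂']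

noncomputable def lamHat (F : Type) [Field F] (u : ℕ) : Matrix (Fin (u+1)) (Fin 2) F[X] :=
  Matrix.of fun j d => if d = 1 then X ^ (u - (j : ℕ)) else 0

noncomputable def nHat (F : Type) [Field F] (u : ℕ) : Matrix (Fin u) (Fin (u+1)) F[X] :=
  Matrix.of fun k j => if (j : ℕ) ≤ k then X ^ ((k : ℕ) - j) else 0

theorem Lpen_mul_lamHat : Lpen F u * lamHat F u = 0 := by
  ext i d : 1
  have hi := i.isLt
  rw [Lpen_mul_apply]
  by_cases hd : d = 1
  · simp [lamHat, hd, ← pow_succ', show u - i = u - (i + 1) + 1 by omega]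
  · simp [lamHat, hd]

theorem Lpen_mul_nHat_transpose : Lpen F u * (nHat F u)ᵀ = -1 := by
  ext i k : 1
  rw [Lpen_mul_apply]
  rcases lt_trichotomy (i : ℕ) k with h | h | h
  · simp [nHat, h.le, Nat.succ_le_of_lt h, ← pow_succ', one_apply, Fin.ne_of_lt h,
      show (k : ℕ) - i = k - (i + 1) + 1 by omega]
  · simp [nHat, Fin.ext h, one_apply]
  · simp [nHat, not_le.mpr (Fin.lt_def.mpr h), one_apply, (Fin.ne_of_lt h).symm,
      show ¬ (i : ℕ) + 1 ≤ k by omega]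

theorem nHat_mul_single_last : nHat F u * single (Fin.last u) (1 : Fin 2) (1 : F[X]) = 0 := by
  ext k d : 1
  by_cases hd : d = 1
  · simp [hd, nHat, show ¬ u ≤ (k : ℕ) by omega]
  · simp [hd]

theorem lamHat_transpose_mul_single_last :
    (lamHat F u)ᵀ * single (Fin.last u) (1 : Fin 2) (1 : F[X]) = single 1 1 1 := by
  ext d d' : 1
  by_cases hd' : d' = 1
  · by_cases hd : d = 1 <;> simp [hd, hd', lamHat, eq_comm]
  · simp [hd', eq_comm]

end SmallPencils

section HatIdentities

variable {F : Type} [Field F] {u n : ℕ}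

noncomputable def firstBlock (F : Type) [Field F] (n : ℕ) : Matrix (Fin n) (Fin 2 × Fin n) F[X] :=
  Matrix.of fun r c => if c = (0, r) then 1 else 0

-- `Λ̂_t(0) ⊗ I_n`
noncomputable def LamHatZeroB (F : Type) [Field F] (u n : ℕ) :
    Matrix (Fin n ⊕ Fin (u+1) × Fin n) (Fin 2 × Fin n) F[X] :=
  fromRows (firstBlock F n) (single (Fin.last u) (1 : Fin 2) (1 : F[X]) ⊗ₖ 1)

theorem firstBlock_transpose_mul_self :
    (firstBlock F n)ᵀ * firstBlock F n = single 0 0 1 ⊗ₖ 1 := by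
  ext ⟨d, r⟩ ⟨d', r'⟩ : 1
  simp [mul_apply, firstBlock, single_apply, one_apply, ite_and, eq_comm]
  split_ifs <;> rfl

theorem LhatB_eq_fromCols : LhatB F u n = fromCols 0 (Lpen F u ⊗ₖ 1) := by
  ext p (r | c) : 1 <;> rfl

theorem LamHatB_eq_fromRows : LamHatB F u n = fromRows (firstBlock F n) (lamHat F u ⊗ₖ 1) := by
  ext (r | ⟨j, s⟩) ⟨d, c⟩ : 1
  · simp [LamHatB, firstBlock, Prod.ext_iff, eq_comm]
  · by_cases hd : d = 1 <;> by_cases hc : s = c <;>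
      simp [LamHatB, lamHat, one_apply, hd, hc, eq_comm (a := c)]

theorem NhatB_eq_fromCols : NhatB F u n = fromCols 0 (nHat F u ⊗ₖ 1) := by
  ext ⟨k, r⟩ (c | ⟨j, s⟩) : 1
  · rfl
  · by_cases h : (j : ℕ) ≤ k <;> by_cases hs : r = s <;> simp [NhatB, nHat, one_apply, h, hs]

theorem LhatB_mul_LamHatB : LhatB F u n * LamHatB F u n = 0 := by
  rw [LhatB_eq_fromCols, LamHatB_eq_fromRows, fromCols_mul_fromRows, Matrix.zero_mul, zero_add,
    ← mul_kronecker_mul, Lpen_mul_lamHat, zero_kronecker]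

theorem LhatB_mul_NhatB_transpose : LhatB F u n * (NhatB F u n)ᵀ = -1 := by
  rw [LhatB_eq_fromCols, NhatB_eq_fromCols, transpose_fromCols, fromCols_mul_fromRows,
    transpose_zero, Matrix.zero_mul, zero_add, ← kroneckerMap_transpose, transpose_one,
    ← mul_kronecker_mul, Lpen_mul_nHat_transpose, Matrix.mul_one,
    ← neg_one_smul F[X] (1 : Matrix (Fin u) (Fin u) F[X]), smul_kronecker, one_kronecker_one,
    neg_one_smul]

theorem NhatB_mul_LamHatZeroB : NhatB F u n * LamHatZeroB F u n = 0 := by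
  rw [NhatB_eq_fromCols, LamHatZeroB, fromCols_mul_fromRows, Matrix.zero_mul, zero_add,
    ← mul_kronecker_mul, nHat_mul_single_last, zero_kronecker]

theorem LamHatB_transpose_mul_LamHatZeroB : (LamHatB F u n)ᵀ * LamHatZeroB F u n = 1 := by
  rw [LamHatB_eq_fromRows, LamHatZeroB, transpose_fromRows, fromCols_mul_fromRows,
    firstBlock_transpose_mul_self, ← kroneckerMap_transpose, transpose_one, ← mul_kronecker_mul,
    lamHat_transpose_mul_single_last, Matrix.mul_one, ← add_kronecker, ← one_kronecker_one]
  congr 1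
  ext i j : 1
  fin_cases i <;> fin_cases j <;> simp [one_apply]

end HatIdentities

section Reversal

variable {F : Type} [Field F]

theorem revMat_transpose {m l : Type*} (g : ℕ) (M : Matrix m l F[X]) :
    revMat g Mᵀ = (revMat g M)ᵀ :=
  rfl

theorem revMat_smul {m l : Type*} (g : ℕ) (a : F) (M : Matrix m l F[X]) :
    revMat g (a • M) = a • revMat g M := by
  ext i j : 1
  simp [revMat, smul_eq_C_mul, reflect_C_mul]

theorem revMat_zero {m l : Type*} (g : ℕ) : revMat g (0 : Matrix m l F[X]) = 0 := by
  ext i j : 1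
  simp [revMat]

theorem revMat_fromBlocks {m₁ m₂ l₁ l₂ : Type*} (g : ℕ) (A : Matrix m₁ l₁ F[X])
    (B : Matrix m₁ l₂ F[X]) (C : Matrix m₂ l₁ F[X]) (D : Matrix m₂ l₂ F[X]) :
    revMat g (fromBlocks A B C D) = fromBlocks (revMat g A) (revMat g B) (revMat g C) (revMat g D) :=
  fromBlocks_map ..

theorem revMat_pencil {m l : Type*} (A B : Matrix m l F) : revMat 1 (pencil A B) = pencil B A := by
  ext i j : 1
  simp only [revMat, pencil, matC, Matrix.map_apply, Matrix.add_apply, Matrix.smul_apply,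
    smul_eq_mul]
  rw [reflect_add, reflect_C, mul_comm X, reflect_C_mul, reflect_one_X]
  ring

variable {u n : ℕ}

def revBlockOrder (s n : ℕ) : Fin s × Fin n ≃ Fin s × Fin n :=
  Fin.revPerm.prodCongr (Equiv.refl _)

def revBlocks (u n : ℕ) : Fin n ⊕ Fin (u+1) × Fin n ≃ Fin n ⊕ Fin (u+1) × Fin n :=
  (Equiv.refl _).sumCongr (revBlockOrder (u+1) n)

theorem revMat_LhatB_submatrix :
    (revMat 1 (LhatB F u n)).submatrix (revBlockOrder u n) (revBlocks u n) =
      -LhatB F u n := by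
  ext ⟨i, r⟩ (c | ⟨j, s⟩) : 1
  · simp [revMat, LhatB, revBlocks]
  · have := i.isLt
    have := j.isLt
    by_cases hs : r = s
    · simp [revMat, LhatB, revBlocks, revBlockOrder, Lpen, hs, Fin.val_rev]
      split_ifs <;> first | omega | simp
    · simp [revMat, LhatB, revBlocks, revBlockOrder, hs]

theorem LamTildeB_submatrix : (LamTildeB F u n).submatrix (revBlocks u n) id = LamHatB F u n := by
  ext (r | ⟨j, s⟩) c : 1
  · rfl
  · simp [LamTildeB, LamHatB, revBlocks, revBlockOrder]

theorem LamTildeB_transpose_mul_mul (M : Matrix (Fin n ⊕ Fin (u+1) × Fin n)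
      (Fin n ⊕ Fin (u+1) × Fin n) F[X]) :
    (LamTildeB F u n)ᵀ * M * LamTildeB F u n =
      (LamHatB F u n)ᵀ * M.submatrix (revBlocks u n) (revBlocks u n) * LamHatB F u n := by
  rw [← LamTildeB_submatrix, transpose_submatrix, submatrix_mul_equiv, submatrix_mul_equiv,
    submatrix_id_id]

theorem revMat_modBK_submatrix (σ : F) (A B : Matrix (Fin n ⊕ Fin (u+1) × Fin n)
      (Fin n ⊕ Fin (u+1) × Fin n) F) :
    (revMat 1 (modBK F u n σ (pencil A B))).submatrix
        ((revBlocks u n).sumCongr (revBlockOrder u n))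
        ((revBlocks u n).sumCongr (revBlockOrder u n)) =
      fromBlocks ((pencil B A).submatrix (revBlocks u n) (revBlocks u n)) (-LhatB F u n)ᵀ
        (σ • -LhatB F u n) 0 := by
  rw [modBK, revMat_fromBlocks, revMat_pencil, revMat_transpose, revMat_smul, revMat_zero,
    ← revMat_LhatB_submatrix]
  ext (i | i) (j | j) : 1 <;> simp

end Reversal

theorem stmt_7_general {F : Type} [Field F] (n u : ℕ)
    (σ : F) (hσ : σ = 1 ∨ σ = -1)
    (A B : Matrix (Fin n ⊕ Fin (u+1) × Fin n) (Fin n ⊕ Fin (u+1) × Fin n) F) :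
    IsLinearization ((2*(u+1) - 2)*n) (modBK F u n σ (pencil A B))
        ((LamHatB F u n)ᵀ * pencil A B * LamHatB F u n) ∧
      IsLinearization ((2*(u+1) - 2)*n) (revMat 1 (modBK F u n σ (pencil A B)))
        ((LamTildeB F u n)ᵀ * pencil B A * LamTildeB F u n) := by
  have hσ0 : σ ≠ 0 := by rcases hσ with rfl | rfl <;> simp
  have hm : Fintype.card (Fin u × Fin n) + Fintype.card (Fin u × Fin n) = (2*(u+1) - 2)*n := by
    simp only [Fintype.card_prod, Fintype.card_fin]; rw [show 2*(u+1) - 2 = 2*u by omega]; ring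
  have hcard : Fintype.card (Fin n ⊕ Fin (u+1) × Fin n) =
      Fintype.card (Fin u × Fin n) + Fintype.card (Fin 2 × Fin n) := by
    simp only [Fintype.card_sum, Fintype.card_prod, Fintype.card_fin]; ring
  constructor
  · refine isLinearization_fromBlocks hm hcard _ (N := -NhatB F u n) hσ0 LhatB_mul_LamHatB ?_ ?_
      LamHatB_transpose_mul_LamHatZeroB
    · rw [transpose_neg, Matrix.mul_neg, LhatB_mul_NhatB_transpose, neg_neg]
    · rw [Matrix.neg_mul, NhatB_mul_LamHatZeroB, neg_zero]
  · refine IsLinearization.of_submatrix ((revBlocks u n).sumCongr (revBlockOrder u n)) ?_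
    rw [revMat_modBK_submatrix, LamTildeB_transpose_mul_mul]
    refine isLinearization_fromBlocks hm hcard _ hσ0 ?_ ?_ NhatB_mul_LamHatZeroB
      LamHatB_transpose_mul_LamHatZeroB
    · rw [Matrix.neg_mul, LhatB_mul_LamHatB, neg_zero]
    · rw [Matrix.neg_mul, LhatB_mul_NhatB_transpose, neg_neg]

/-- (`t = u+1 ≥ 2`.) Every modified block Kronecker pencil `L(λ)` is a
linearization of `P(λ) = (Λ̂_t(λ)ᵀ⊗I_n)(λB+A)(Λ̂_t(λ)⊗I_n)`, and `rev_1 L(λ)` is a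
linearization of `P̃(λ) = (Λ̃_t(λ)ᵀ⊗I_n)(λA+B)(Λ̃_t(λ)⊗I_n)`. -/
theorem stmt_7 {F : Type} [Field F] (n u : ℕ) (hn : 0 < n) (hu : 1 ≤ u)
    (σ : F) (hσ : σ = 1 ∨ σ = -1)
    (A B : Matrix (Fin n ⊕ Fin (u+1) × Fin n) (Fin n ⊕ Fin (u+1) × Fin n) F) :
    IsLinearization ((2*(u+1) - 2)*n) (modBK F u n σ (pencil A B))
        ((LamHatB F u n)ᵀ * pencil A B * LamHatB F u n) ∧
      IsLinearization ((2*(u+1) - 2)*n) (revMat 1 (modBK F u n σ (pencil A B)))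
        ((LamTildeB F u n)ᵀ * pencil B A * LamTildeB F u n) :=
  stmt_7_general n u σ hσ A B
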